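/- For every integer n ≥ 1 and every p > 0 there exists a constant C depending only on n and p with the following property: whenever x, y ∈ ℝⁿ satisfy |y−x| ≥ 1, ε ∈ {−1,1}ⁿ is a sign vector such that y−x lies in the closed orthant of ε, and h > 0, one has (|y−x|/h)^p · exp(−|y−x|²/(4h)) ≤ C · exp(−|y−(x+η_ε)|²/(4h)). -/

import Mathlib

/-! Since `y - x` lies in the orthant of `ε`, its inner product with `η_ε` is
`|y - x|₁ / n ≥ |y - x| / n`, while `|η_ε|² = 1 / n`; for `|y - x| ≥ 1` this gives
`|y - (x + η_ε)|² ≤ |y - x|² - |y - x| / n`. So the right-hand Gaussian gains the factor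
`exp(t / (4n))` with `t = |y - x| / h`, and this absorbs `t ^ p`. -/

open MeasureTheory Metric Set

noncomputable section

abbrev Euc (n : ℕ) : Type := EuclideanSpace ℝ (Fin n)

/-- For a sign vector `ε ∈ {-1,1}ⁿ`, the perturbation vector `η_ε = (1/n) ε`. -/
def signPerturb (n : ℕ) (ε : Fin n → Bool) : Euc n :=
  (EuclideanSpace.equiv (Fin n) ℝ).symm fun i => (1 / (n : ℝ)) * (if ε i then 1 else -1)

theorem Real.rpow_le_mul_exp_mul {p a t : ℝ} (hp : 0 < p) (ha : 0 < a) (ht : 0 ≤ t) :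
    t ^ p ≤ (p / a) ^ p * Real.exp (-p) * Real.exp (a * t) := by
  have hu : a * t / p ≤ Real.exp (a * t / p - 1) := by
    linarith [Real.add_one_le_exp (a * t / p - 1)]
  calc t ^ p = (p / a) ^ p * (a * t / p) ^ p := by
        rw [← Real.mul_rpow (by positivity) (by positivity)]
        field_simp
    _ ≤ (p / a) ^ p * Real.exp (a * t / p - 1) ^ p := by gcongr
    _ = (p / a) ^ p * Real.exp (-p) * Real.exp (a * t) := by
        rw [← Real.exp_mul, mul_assoc, ← Real.exp_add]
        congr 2
        field_simp
        ring

theorem EuclideanSpace.norm_le_sum_norm {𝕜 ι : Type*} [RCLike 𝕜] [Fintype ι]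
    (v : EuclideanSpace 𝕜 ι) : ‖v‖ ≤ ∑ i, ‖v i‖ := by
  rw [EuclideanSpace.norm_eq, Real.sqrt_le_iff]
  exact ⟨by positivity, Finset.sum_sq_le_sq_sum_of_nonneg fun i _ => norm_nonneg _⟩

theorem signPerturb_apply (n : ℕ) (ε : Fin n → Bool) (i : Fin n) :
    signPerturb n ε i = (1 / (n : ℝ)) * (if ε i then 1 else -1) :=
  rfl

theorem norm_signPerturb_sq (n : ℕ) (ε : Fin n → Bool) : ‖signPerturb n ε‖ ^ 2 = 1 / n := by
  have hcoord : ∀ i, ‖signPerturb n ε i‖ ^ 2 = 1 / (n : ℝ) ^ 2 := by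
    intro i
    rw [signPerturb_apply, Real.norm_eq_abs, sq_abs]
    split_ifs <;> ring
  rw [EuclideanSpace.norm_eq, Real.sq_sqrt (by positivity), Finset.sum_congr rfl fun i _ => hcoord i]
  simp only [Finset.sum_const, Finset.card_univ, Fintype.card_fin, nsmul_eq_mul]
  rcases n.eq_zero_or_pos with rfl | hn
  · simp
  · field_simp

theorem norm_div_le_inner_signPerturb {n : ℕ} {ε : Fin n → Bool} {v : Euc n}
    (hv : ∀ i, 0 ≤ (if ε i then (1 : ℝ) else -1) * v i) :
    ‖v‖ / n ≤ inner ℝ v (signPerturb n ε) := by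
  have habs : ∀ i, ‖v i‖ = (if ε i then (1 : ℝ) else -1) * v i := by
    intro i
    have := hv i
    rw [Real.norm_eq_abs]
    split_ifs at this ⊢
    · rw [one_mul] at this ⊢
      exact abs_of_nonneg this
    · rw [neg_one_mul] at this ⊢
      exact abs_of_nonpos (neg_nonneg.mp this)
  have hinner : inner ℝ v (signPerturb n ε) = (∑ i, ‖v i‖) / n := by
    simp only [PiLp.inner_apply, habs, Finset.sum_div, signPerturb_apply, RCLike.inner_apply,
      conj_trivial]
    exact Finset.sum_congr rfl fun i _ => by ring
  rw [hinner]
  gcongr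
  exact EuclideanSpace.norm_le_sum_norm v

theorem norm_sub_signPerturb_sq_le {n : ℕ} {ε : Fin n → Bool} {v : Euc n} (hv1 : 1 ≤ ‖v‖)
    (hv : ∀ i, 0 ≤ (if ε i then (1 : ℝ) else -1) * v i) :
    ‖v - signPerturb n ε‖ ^ 2 ≤ ‖v‖ ^ 2 - ‖v‖ / n := by
  have hsmall : 1 / (n : ℝ) ≤ ‖v‖ / n := by gcongr
  rw [norm_sub_sq_real, norm_signPerturb_sq]
  linarith [norm_div_le_inner_signPerturb hv]

/-- For every `n ≥ 1` and `p > 0` there is `C = C(n,p)` such that whenever `|y-x| ≥ 1`,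
`y - x` lies in the closed orthant of the sign vector `ε`, and `h > 0`, one has
`(|y-x|/h)^p exp(-|y-x|²/(4h)) ≤ C exp(-|y-(x+η_ε)|²/(4h))`. -/
theorem directional_perturbation_power_estimate (n : ℕ) (hn : 1 ≤ n) (p : ℝ) (hp : 0 < p) :
    ∃ C : ℝ, 0 < C ∧ ∀ x y : Euc n, 1 ≤ ‖y - x‖ →
      ∀ ε : Fin n → Bool, (∀ i : Fin n, 0 ≤ (if ε i then (1 : ℝ) else -1) * (y - x) i) →
      ∀ h : ℝ, 0 < h →
        (‖y - x‖ / h) ^ p * Real.exp (-‖y - x‖ ^ 2 / (4 * h)) ≤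
          C * Real.exp (-‖y - (x + signPerturb n ε)‖ ^ 2 / (4 * h)) := by
  have hn_pos : (0 : ℝ) < n := by exact_mod_cast hn
  set a : ℝ := 1 / (4 * n)
  refine ⟨(p / a) ^ p * Real.exp (-p), by positivity, fun x y hxy ε hε h hh => ?_⟩
  have hshift : y - (x + signPerturb n ε) = (y - x) - signPerturb n ε := by abel
  have hgain : a * (‖y - x‖ / h) + -‖y - x‖ ^ 2 / (4 * h) ≤
      -‖y - (x + signPerturb n ε)‖ ^ 2 / (4 * h) := by
    rw [hshift, show a * (‖y - x‖ / h) = ‖y - x‖ / n / (4 * h) by simp only [a]; field_simp, ← add_div]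
    gcongr
    linarith [norm_sub_signPerturb_sq_le hxy hε]
  calc (‖y - x‖ / h) ^ p * Real.exp (-‖y - x‖ ^ 2 / (4 * h))
      ≤ (p / a) ^ p * Real.exp (-p) * Real.exp (a * (‖y - x‖ / h)) *
          Real.exp (-‖y - x‖ ^ 2 / (4 * h)) := by
        gcongr
        exact Real.rpow_le_mul_exp_mul hp (by positivity) (by positivity)
    _ ≤ (p / a) ^ p * Real.exp (-p) * Real.exp (-‖y - (x + signPerturb n ε)‖ ^ 2 / (4 * h)) := by
        rw [mul_assoc _ (Real.exp _), ← Real.exp_add]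
        gcongr

end
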